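/- If β is a Pisot number and l ∈ (-1, 0], then for every x ∈ [l, l+1) ∩ ℚ(β), the (-β,l)-expansion of x is eventually periodic. -/

import Mathlib

noncomputable def negBetaT (β l x : ℝ) : ℝ := -β * x - ⌊-β * x - l⌋

noncomputable def negBetaDigit (β l x : ℝ) (i : ℕ) : ℤ :=
  ⌊-β * ((negBetaT β l)^[i] x) - l⌋

/-- `β` is a Pisot number: an algebraic integer `> 1` all of whose other
complex conjugates (roots of its minimal polynomial over `ℚ`) have modulus `< 1`. -/
def IsPisot (β : ℝ) : Prop :=
  1 < β ∧ IsIntegral ℤ β ∧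
    ∀ z : ℂ, Polynomial.aeval z (minpoly ℚ β) = 0 → z ≠ (β : ℂ) → ‖z‖ < 1

def EventuallyPeriodic (u : ℕ → ℤ) : Prop :=
  ∃ N p : ℕ, 0 < p ∧ ∀ n ≥ N, u (n + p) = u n

/-!
Every point `Tⁿ x` of the orbit lies in `ℚ(β)` and satisfies `Tⁿ⁺¹ x = -β Tⁿ x - xₙ₊₁` with
integer digits bounded by `β + 2`. Since `β` is an algebraic integer, a fixed integer multiple
of every `Tⁿ x` is an algebraic integer. Its conjugates are bounded: under the real embedding
`Tⁿ x ∈ [-1, 1]`, and under any other embedding the conjugate of `β` has modulus `< 1`, so the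
recurrence is a contraction up to a bounded error. Only finitely many algebraic integers of
`ℚ(β)` have all conjugates bounded, hence the orbit is finite, and so eventually periodic.
-/

theorem eventuallyPeriodic_comp_iterate {α : Type*} (f : α → α) (g : α → ℤ) {x : α}
    (h : (Set.range fun n => f^[n] x).Finite) :
    EventuallyPeriodic fun n => g (f^[n] x) := by
  obtain ⟨m, n, heq, hne⟩ := Function.not_injective_iff.mp
    fun hinj => Set.infinite_range_of_injective hinj h
  wlog hmn : m < n generalizing m n
  · exact this n m heq.symm hne.symm (by omega)
  refine ⟨m, n - m, by omega, fun k hk => ?_⟩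
  obtain ⟨j, rfl⟩ := Nat.exists_eq_add_of_le hk
  have hperiod : m + j + (n - m) = j + n := by omega
  dsimp only
  rw [hperiod, Function.iterate_add_apply, ← heq, ← Function.iterate_add_apply, Nat.add_comm j m]

theorem le_max_of_le_mul_add {a : ℕ → ℝ} {r D : ℝ} (hr₀ : 0 ≤ r) (hr₁ : r < 1)
    (h : ∀ n, a (n + 1) ≤ r * a n + D) (n : ℕ) : a n ≤ max (a 0) (D / (1 - r)) := by
  set M := max (a 0) (D / (1 - r))
  have hD : D ≤ (1 - r) * M := by
    rw [← div_le_iff₀' (by linarith)]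
    exact le_max_right _ _
  induction n with
  | zero => exact le_max_left _ _
  | succ n ih => nlinarith [h n]

theorem abs_floor_le (z : ℝ) : |(⌊z⌋ : ℝ)| ≤ |z| + 1 := by
  have h₁ := Int.floor_le z
  have h₂ := Int.lt_floor_add_one z
  rw [abs_le]
  constructor <;> cases abs_cases z <;> linarith

theorem exists_bound_of_recurrence {K : Type*} [Field K] (φ : K →+* ℂ) {c : K}
    (hc : ‖φ c‖ < 1) {d : ℕ → ℤ} {D : ℝ} (hd : ∀ n, |(d n : ℝ)| ≤ D) {y : ℕ → K}
    (hy : ∀ n, y (n + 1) = c * y n - d n) : ∃ C, ∀ n, ‖φ (y n)‖ ≤ C := by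
  refine ⟨_, le_max_of_le_mul_add (D := D) (norm_nonneg (φ c)) hc fun n => ?_⟩
  calc ‖φ (y (n + 1))‖ ≤ ‖φ c‖ * ‖φ (y n)‖ + ‖((d n : ℤ) : ℂ)‖ := by
        rw [hy, map_sub, map_mul, map_intCast, ← norm_mul]
        exact norm_sub_le _ _
    _ ≤ ‖φ c‖ * ‖φ (y n)‖ + D := by rw [Complex.norm_intCast]; linarith [hd n]

theorem NumberField.finite_range_of_recurrence {K : Type*} [Field K] [NumberField K] {c : K}
    (hc : IsIntegral ℤ c) (d : ℕ → ℤ) {y : ℕ → K} (hy : ∀ n, y (n + 1) = c * y n - d n)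
    (hbdd : ∀ φ : K →+* ℂ, ∃ C, ∀ n, ‖φ (y n)‖ ≤ C) : (Set.range y).Finite := by
  have halg : IsAlgebraic ℤ (y 0) := by
    rw [IsFractionRing.isAlgebraic_iff ℤ ℚ K]
    exact (IsIntegral.of_finite ℚ (y 0)).isAlgebraic
  obtain ⟨q, hq, hq₀⟩ := halg.exists_integral_multiple
  have hint (n : ℕ) : IsIntegral ℤ ((q : K) * y n) := by
    induction n with
    | zero => simpa [zsmul_eq_mul] using hq₀
    | succ n ih =>
      rw [hy, show (q : K) * (c * y n - d n) = c * (q * y n) - ((q * d n : ℤ) : K) by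
        push_cast; ring]
      exact (hc.mul ih).sub isIntegral_algebraMap
  choose C hC using hbdd
  obtain ⟨M, hM⟩ := (Set.finite_range C).bddAbove
  refine ((Embeddings.finite_of_norm_le K ℂ (|(q : ℝ)| * M)).image ((q : K)⁻¹ * ·)).subset ?_
  rintro _ ⟨n, rfl⟩
  refine ⟨q * y n, ⟨hint n, fun φ => ?_⟩, by simp [hq]⟩
  rw [map_mul, norm_mul, map_intCast, Complex.norm_intCast]
  exact mul_le_mul_of_nonneg_left ((hC φ n).trans (hM ⟨φ, rfl⟩)) (abs_nonneg _)

section NegBetaTransformation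

variable {β l : ℝ}

theorem negBetaT_mem_Ico (β l y : ℝ) : negBetaT β l y ∈ Set.Ico l (l + 1) := by
  have h : negBetaT β l y = Int.fract (-β * y - l) + l := by
    rw [negBetaT, Int.fract]; ring
  rw [h]
  exact ⟨by linarith [Int.fract_nonneg (-β * y - l)],
    by linarith [Int.fract_lt_one (-β * y - l)]⟩

theorem negBetaT_iterate_mem_Ico {x : ℝ} (hx : x ∈ Set.Ico l (l + 1)) (n : ℕ) :
    (negBetaT β l)^[n] x ∈ Set.Ico l (l + 1) := by
  cases n with
  | zero => exact hx
  | succ n => rw [Function.iterate_succ_apply']; exact negBetaT_mem_Ico β l _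

theorem negBetaT_iterate_succ (β l x : ℝ) (n : ℕ) :
    (negBetaT β l)^[n + 1] x = -β * (negBetaT β l)^[n] x - negBetaDigit β l x n := by
  rw [Function.iterate_succ_apply', negBetaT, negBetaDigit]

theorem negBetaT_iterate_mem {S : Type*} [SetLike S ℝ] [SubringClass S ℝ] {s : S}
    (hβ : β ∈ s) {x : ℝ} (hx : x ∈ s) (n : ℕ) : (negBetaT β l)^[n] x ∈ s := by
  induction n with
  | zero => exact hx
  | succ n ih =>
    rw [negBetaT_iterate_succ]
    exact sub_mem (mul_mem (neg_mem hβ) ih) (intCast_mem s _)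

theorem abs_le_one_of_mem_Ico (hl₁ : -1 < l) (hl₂ : l ≤ 0) {y : ℝ}
    (hy : y ∈ Set.Ico l (l + 1)) : |y| ≤ 1 :=
  abs_le.mpr ⟨by linarith [hy.1], by linarith [hy.2]⟩

theorem abs_negBetaDigit_le (hβ : 0 ≤ β) (hl₁ : -1 < l) (hl₂ : l ≤ 0) {x : ℝ}
    (hx : x ∈ Set.Ico l (l + 1)) (n : ℕ) : |(negBetaDigit β l x n : ℝ)| ≤ β + 2 := by
  have hy := abs_le_one_of_mem_Ico hl₁ hl₂ (negBetaT_iterate_mem_Ico (β := β) hx n)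
  have hl : |l| ≤ 1 := abs_le.mpr ⟨by linarith, by linarith⟩
  calc |(negBetaDigit β l x n : ℝ)| ≤ |-β * (negBetaT β l)^[n] x - l| + 1 := abs_floor_le _
    _ ≤ β * |(negBetaT β l)^[n] x| + |l| + 1 := by
        gcongr
        refine (abs_sub _ _).trans_eq ?_
        rw [abs_mul, abs_neg, abs_of_nonneg hβ]
    _ ≤ β + 2 := by nlinarith

end NegBetaTransformation

open IntermediateField

theorem IsPisot.norm_embedding_lt_one_or_eq_ofReal {β : ℝ} (hβ : IsPisot β)
    (φ : ℚ⟮β⟯ →+* ℂ) :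
    ‖φ (AdjoinSimple.gen ℚ β)‖ < 1 ∨ ∀ w : ℚ⟮β⟯, φ w = ((w : ℝ) : ℂ) := by
  by_cases h : φ (AdjoinSimple.gen ℚ β) = β
  · right
    intro w
    have hext : φ.toRatAlgHom = (Complex.ofRealHom.comp (algebraMap ℚ⟮β⟯ ℝ)).toRatAlgHom :=
      adjoin_algHom_ext ℚ <| by rintro _ rfl; exact h
    exact DFunLike.congr_fun hext w
  · left
    refine hβ.2.2 _ ?_ h
    rw [← minpoly_gen]
    have := Polynomial.aeval_algHom_apply φ.toRatAlgHom (AdjoinSimple.gen ℚ β)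
      (minpoly ℚ (AdjoinSimple.gen ℚ β))
    rwa [minpoly.aeval, map_zero] at this

theorem stmt_18 (β l : ℝ) (hβ : IsPisot β) (hl₁ : -1 < l) (hl₂ : l ≤ 0)
    (x : ℝ) (hx : x ∈ Set.Ico l (l + 1))
    (hxQ : x ∈ IntermediateField.adjoin ℚ {β}) :
    EventuallyPeriodic (negBetaDigit β l x) := by
  have : FiniteDimensional ℚ ℚ⟮β⟯ := adjoin.finiteDimensional hβ.2.1.tower_top
  have : NumberField ℚ⟮β⟯ := ⟨⟩
  set b := AdjoinSimple.gen ℚ β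
  have hb : IsIntegral ℤ b := (isIntegral_algebraMap_iff (algebraMap ℚ⟮β⟯ ℝ).injective).mp hβ.2.1
  let y : ℕ → ℚ⟮β⟯ := fun n =>
    ⟨(negBetaT β l)^[n] x, negBetaT_iterate_mem (mem_adjoin_simple_self ℚ β) hxQ n⟩
  have hy (n : ℕ) : y (n + 1) = -b * y n - negBetaDigit β l x n :=
    Subtype.ext (negBetaT_iterate_succ β l x n)
  have hfin : (Set.range y).Finite := by
    refine NumberField.finite_range_of_recurrence hb.neg _ hy fun φ => ?_
    rcases hβ.norm_embedding_lt_one_or_eq_ofReal φ with hφ | hφ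
    · exact exists_bound_of_recurrence φ (by rwa [map_neg, norm_neg])
        (abs_negBetaDigit_le (by linarith [hβ.1]) hl₁ hl₂ hx) hy
    · refine ⟨1, fun n => ?_⟩
      rw [hφ, Complex.norm_real, Real.norm_eq_abs]
      exact abs_le_one_of_mem_Ico hl₁ hl₂ (negBetaT_iterate_mem_Ico hx n)
  exact eventuallyPeriodic_comp_iterate _ (fun z => ⌊-β * z - l⌋)
    (Set.range_comp Subtype.val y ▸ hfin.image _)
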